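/- Consider two agents (N = 2) in ℝ^n joined by the single edge (1,2), with target configuration (b_1, b_2), and let K = { (a_1, a_2) ∈ ℝ^n × ℝ^n : a_1 + a_2 = 0 and (a_1, a_2) is an equilibrium of the formation control system }. Set b = (b_1 − b_2)/2, r = |b_1 − b_2|/2, and S_r(b) = { v ∈ ℝ^n : |v − b| = r }. Then the map φ(v) = (v/2, −v/2) is a bijection from S_r(b) onto K. -/
import Mathlib


open scoped RealInnerProductSpace Classical

/-- The control law `u₁₂` for two agents. -/
noncomputable def uTwo {n : ℕ} (b1 b2 a1 a2 : EuclideanSpace ℝ (Fin n)) : ℝ :=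
  if a2 = a1 then 0 else ⟪b2 - b1, a2 - a1⟫ / ‖a2 - a1‖ ^ 2 - 1

lemma sub_eq_neg_aux {n : ℕ} (v : EuclideanSpace ℝ (Fin n)) :
    -((2 : ℝ)⁻¹ • v) - (2 : ℝ)⁻¹ • v = -v := by
  rw [sub_eq_add_neg, ← neg_add, ← two_smul ℝ, smul_smul]
  norm_num

lemma diff_eq_aux {n : ℕ} (v : EuclideanSpace ℝ (Fin n)) :
    (2 : ℝ)⁻¹ • v - -((2 : ℝ)⁻¹ • v) = v := by
  rw [sub_neg_eq_add, ← two_smul ℝ, smul_smul]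
  norm_num

lemma inner_flip_aux {n : ℕ} (b1 b2 v : EuclideanSpace ℝ (Fin n)) :
    (⟪b2 - b1, -v⟫ : ℝ) = ⟪b1 - b2, v⟫ := by
  rw [inner_neg_right, ← inner_neg_left]
  congr 1
  abel

lemma key_aux {n : ℕ} (b1 b2 v : EuclideanSpace ℝ (Fin n)) :
    v ∈ Metric.sphere ((2 : ℝ)⁻¹ • (b1 - b2)) (‖b1 - b2‖ / 2) ↔
      uTwo b1 b2 ((2 : ℝ)⁻¹ • v) (-((2 : ℝ)⁻¹ • v)) • v = 0 := by
  set b : EuclideanSpace ℝ (Fin n) := (2 : ℝ)⁻¹ • (b1 - b2) with hb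
  have hbn : ‖b1 - b2‖ / 2 = ‖b‖ := by
    rw [hb, norm_smul]
    simp
    ring
  have hinner : ⟪v, b⟫ * 2 = ⟪b1 - b2, v⟫ := by
    rw [hb, real_inner_smul_right, real_inner_comm]
    ring
  have hsphere : v ∈ Metric.sphere b (‖b1 - b2‖ / 2) ↔ ⟪b1 - b2, v⟫ = ‖v‖ ^ 2 := by
    rw [mem_sphere_iff_norm, hbn]
    constructor
    · intro h
      have h2 : ‖v - b‖ ^ 2 = ‖b‖ ^ 2 := by rw [h]
      rw [norm_sub_sq_real] at h2
      linarith
    · intro h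
      have h2 : ‖v - b‖ ^ 2 = ‖b‖ ^ 2 := by
        rw [norm_sub_sq_real]
        linarith
      have := congrArg Real.sqrt h2
      rwa [Real.sqrt_sq (norm_nonneg _), Real.sqrt_sq (norm_nonneg _)] at this
  by_cases hv : v = 0
  · subst hv
    rw [hsphere]
    simp
  · have hcond : ¬(-((2 : ℝ)⁻¹ • v) = (2 : ℝ)⁻¹ • v) := by
      intro h
      apply hv
      have h2 : (2 : ℝ)⁻¹ • v + (2 : ℝ)⁻¹ • v = 0 := by
        nth_rewrite 1 [← h]
        simp
      rw [← two_smul ℝ, smul_smul] at h2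
      norm_num at h2
      exact h2
    have hu : uTwo b1 b2 ((2 : ℝ)⁻¹ • v) (-((2 : ℝ)⁻¹ • v)) =
        ⟪b2 - b1, -v⟫ / ‖v‖ ^ 2 - 1 := by
      rw [uTwo, if_neg hcond, sub_eq_neg_aux, norm_neg]
    rw [hsphere, hu, smul_eq_zero, inner_flip_aux]
    have hnv : (0 : ℝ) < ‖v‖ ^ 2 := by
      have := norm_pos_iff.mpr hv
      positivity
    constructor
    · intro h
      left
      rw [h, div_self (ne_of_gt hnv), sub_self]
    · rintro (h | h)
      · have h2 : ⟪b1 - b2, v⟫ / ‖v‖ ^ 2 = 1 := by linarith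
        rw [div_eq_one_iff_eq (ne_of_gt hnv)] at h2
        exact h2
      · exact absurd h hv

/-- For two agents with the single edge `(1,2)`, the map `φ(v) = (v/2, -v/2)` is a bijection
from the sphere `S_r(b)` (with `b = (b₁ - b₂)/2`, `r = ‖b₁ - b₂‖/2`) onto the set `K` of
zero-centroid equilibria of the formation control system. -/
theorem bijOn_sphere_equilibria {n : ℕ} (b1 b2 : EuclideanSpace ℝ (Fin n)) :
    Set.BijOn
      (fun v : EuclideanSpace ℝ (Fin n) => ((2 : ℝ)⁻¹ • v, -((2 : ℝ)⁻¹ • v)))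
      (Metric.sphere ((2 : ℝ)⁻¹ • (b1 - b2)) (‖b1 - b2‖ / 2))
      {p : EuclideanSpace ℝ (Fin n) × EuclideanSpace ℝ (Fin n) |
        p.1 + p.2 = 0 ∧
        uTwo b1 b2 p.1 p.2 • (p.1 - p.2) = 0 ∧
        uTwo b1 b2 p.1 p.2 • (p.2 - p.1) = 0} := by
  refine ⟨?_, ?_, ?_⟩
  · intro v hv
    have hk := (key_aux b1 b2 v).mp hv
    refine ⟨by simp, ?_, ?_⟩
    · show uTwo b1 b2 ((2 : ℝ)⁻¹ • v) (-((2 : ℝ)⁻¹ • v)) •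
        ((2 : ℝ)⁻¹ • v - -((2 : ℝ)⁻¹ • v)) = 0
      rw [diff_eq_aux]
      exact hk
    · show uTwo b1 b2 ((2 : ℝ)⁻¹ • v) (-((2 : ℝ)⁻¹ • v)) •
        (-((2 : ℝ)⁻¹ • v) - (2 : ℝ)⁻¹ • v) = 0
      rw [sub_eq_neg_aux, smul_neg, hk, neg_zero]
  · intro v1 _ v2 _ h
    have h1 : (2 : ℝ)⁻¹ • v1 = (2 : ℝ)⁻¹ • v2 := congrArg Prod.fst h
    have := congrArg (fun w : EuclideanSpace ℝ (Fin n) => (2 : ℝ) • w) h1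
    simpa [smul_smul] using this
  · intro p hp
    obtain ⟨hsum, heq, -⟩ := hp
    have hp2 : p.2 = -p.1 := by
      have := eq_neg_of_add_eq_zero_left hsum
      rw [this]
      simp
    have h1 : (2 : ℝ)⁻¹ • ((2 : ℝ) • p.1) = p.1 := by
      rw [smul_smul]; norm_num
    refine ⟨(2 : ℝ) • p.1, ?_, ?_⟩
    · apply (key_aux b1 b2 _).mpr
      rw [h1]
      have hd : p.1 - p.2 = (2 : ℝ) • p.1 := by
        rw [hp2, sub_neg_eq_add, two_smul]
      rw [← hp2, ← hd]
      exact heq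
    · show ((2 : ℝ)⁻¹ • ((2 : ℝ) • p.1), -((2 : ℝ)⁻¹ • ((2 : ℝ) • p.1))) = p
      rw [h1, ← hp2]
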